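/- Let h : ℝ^d ∖ {0} → ℝ be twice continuously differentiable, even, and strictly subharmonic: Δh(x) > 0 for all x ≠ 0. Fix w₁,…,w_k ∈ ℝ^d and define the fixed-charge loss L(θ₁,…,θ_k) = 2 Σ_{1≤i<j≤k} h(θ_i − θ_j) − 2 Σ_{i=1}^k Σ_{j=1}^k h(θ_i − w_j). Suppose θ = (θ₁,…,θ_k) satisfies θ_i ≠ θ_j for i ≠ j and θ_i ≠ w_j for all i, j. Then the correlated-translation function H(v) = L(θ₁ + v, …, θ_k + v), v ∈ ℝ^d, satisfies ΔH(0) = −2 Σ_{i=1}^k Σ_{j=1}^k Δh(θ_i − w_j) < 0. Consequently v = 0 is not a local minimum of H, and θ is not a local minimum of L. -/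

import Mathlib

/-!
Translating every `θᵢ` by the same `v` leaves the repulsion terms `h (θᵢ - θⱼ)` unchanged,
so `H v` is a constant minus `2 ∑ᵢⱼ h (θᵢ - wⱼ + v)` and `ΔH(0) = -2 ∑ᵢⱼ Δh(θᵢ - wⱼ) < 0`
by strict subharmonicity. At a local minimum of a `C²` function every second directional
derivative, hence the Laplacian, is nonnegative (restrict to lines and apply the one-variable
second-derivative test), so `0` is not a local minimum of `H`, and then `θ` cannot be one
of `L` either.
-/

open Finset

/-- The Laplacian of `f : ℝ^d → ℝ` at `x`: the trace of the Hessian, i.e. the sum of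
the second derivatives in the coordinate directions. -/
noncomputable def laplacian {d : ℕ} (f : EuclideanSpace ℝ (Fin d) → ℝ)
    (x : EuclideanSpace ℝ (Fin d)) : ℝ :=
  ∑ i : Fin d, iteratedFDeriv ℝ 2 f x ![EuclideanSpace.single i 1, EuclideanSpace.single i 1]

open Filter Topology

theorem IsLocalMin.deriv_deriv_nonneg {g : ℝ → ℝ} {t : ℝ} (hmin : IsLocalMin g t)
    (hg : ContinuousAt g t) : 0 ≤ deriv (deriv g) t := by
  by_contra! hneg
  have hmax : IsLocalMax g t := isLocalMax_of_deriv_deriv_neg hneg hmin.deriv_eq_zero hg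
  have hconst : g =ᶠ[𝓝 t] fun _ => g t := by
    filter_upwards [hmin, hmax] with s hs₁ hs₂ using le_antisymm hs₂ hs₁
  have hderiv : deriv g =ᶠ[𝓝 t] fun _ => 0 := by
    filter_upwards [hconst.eventuallyEq_nhds] with s hs
    rw [hs.deriv_eq, deriv_const]
  rw [hderiv.deriv_eq, deriv_const] at hneg
  exact hneg.false

section

variable {E F : Type*} [NormedAddCommGroup E] [NormedSpace ℝ E]
  [NormedAddCommGroup F] [NormedSpace ℝ F]

theorem deriv_deriv_comp_add_smul {H : E → F} {x : E} (hH : ContDiffAt ℝ 2 H x) (e : E) :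
    deriv (deriv fun t : ℝ => H (x + t • e)) 0 = iteratedFDeriv ℝ 2 H x ![e, e] := by
  have hline : ∀ t : ℝ, HasDerivAt (fun s : ℝ => x + s • e) e t := fun t => by
    simpa using ((hasDerivAt_id t).smul_const e).const_add x
  have hnear : ∀ᶠ t in 𝓝 (0 : ℝ), DifferentiableAt ℝ H (x + t • e) := by
    have hto : Tendsto (fun t : ℝ => x + t • e) (𝓝 0) (𝓝 x) := by
      simpa using (hline 0).continuousAt.tendsto
    exact hto.eventually <|
      (hH.eventually (by simp)).mono fun y hy => hy.differentiableAt two_ne_zero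
  have hderiv : deriv (fun t : ℝ => H (x + t • e)) =ᶠ[𝓝 0]
      fun t => fderiv ℝ H (x + t • e) e := by
    filter_upwards [hnear] with t ht
    exact (ht.hasFDerivAt.comp_hasDerivAt t (hline t)).deriv
  have hfd : DifferentiableAt ℝ (fderiv ℝ H) (x + (0 : ℝ) • e) := by
    rw [zero_smul, add_zero]
    exact (hH.fderiv_right (m := 1) (by norm_num)).differentiableAt one_ne_zero
  have h1 : HasDerivAt (fun t : ℝ => fderiv ℝ H (x + t • e))
      (fderiv ℝ (fderiv ℝ H) (x + (0 : ℝ) • e) e) 0 :=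
    hfd.hasFDerivAt.comp_hasDerivAt 0 (hline 0)
  have h2 : HasDerivAt (fun t : ℝ => fderiv ℝ H (x + t • e) e)
      (fderiv ℝ (fderiv ℝ H) (x + (0 : ℝ) • e) e e) 0 := by
    simpa using h1.clm_apply (hasDerivAt_const 0 e)
  rw [hderiv.deriv_eq, h2.deriv, iteratedFDeriv_two_apply]
  simp

theorem IsLocalMin.iteratedFDeriv_two_nonneg {H : E → ℝ} {x : E} (hmin : IsLocalMin H x)
    (hH : ContDiffAt ℝ 2 H x) (e : E) : 0 ≤ iteratedFDeriv ℝ 2 H x ![e, e] := by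
  have hline : Continuous fun t : ℝ => x + t • e := by fun_prop
  rw [← deriv_deriv_comp_add_smul hH e]
  refine IsLocalMin.deriv_deriv_nonneg ?_ ?_
  · exact IsLocalMin.comp_continuous (by simpa using hmin) hline.continuousAt
  · exact ContinuousAt.comp (by simpa using hH.continuousAt) hline.continuousAt

end

section

variable {d : ℕ} {f : EuclideanSpace ℝ (Fin d) → ℝ} {x : EuclideanSpace ℝ (Fin d)}

theorem laplacian_const_add (c : ℝ) (hf : ContDiffAt ℝ 2 f x) :
    laplacian (fun v => c + f v) x = laplacian f x := by
  simp [laplacian, fun_iteratedFDeriv_add_apply contDiffAt_const hf, iteratedFDeriv_const_of_ne]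

theorem laplacian_const_mul (a : ℝ) (hf : ContDiffAt ℝ 2 f x) :
    laplacian (fun v => a * f v) x = a * laplacian f x := by
  simp [laplacian, ← smul_eq_mul, iteratedFDeriv_const_smul_apply' hf, smul_sum]

theorem laplacian_sum {ι : Type*} (s : Finset ι) {f : ι → EuclideanSpace ℝ (Fin d) → ℝ}
    (hf : ∀ i ∈ s, ContDiffAt ℝ 2 (f i) x) :
    laplacian (fun v => ∑ i ∈ s, f i v) x = ∑ i ∈ s, laplacian (f i) x := by
  simp [laplacian, iteratedFDeriv_fun_sum_apply hf, sum_comm (s := s)]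

theorem laplacian_comp_add_left (f : EuclideanSpace ℝ (Fin d) → ℝ)
    (a x : EuclideanSpace ℝ (Fin d)) :
    laplacian (fun v => f (a + v)) x = laplacian f (a + x) := by
  simp [laplacian, iteratedFDeriv_comp_add_left]

theorem IsLocalMin.laplacian_nonneg (hmin : IsLocalMin f x) (hf : ContDiffAt ℝ 2 f x) :
    0 ≤ laplacian f x :=
  sum_nonneg fun _ _ => hmin.iteratedFDeriv_two_nonneg hf _

end

theorem stmt14 {d k : ℕ} (hk : 0 < k)
    (h : EuclideanSpace ℝ (Fin d) → ℝ)
    (hC2 : ContDiffOn ℝ 2 h {(0 : EuclideanSpace ℝ (Fin d))}ᶜ)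
    (hsub : ∀ x : EuclideanSpace ℝ (Fin d), x ≠ 0 → 0 < laplacian h x)
    (w : Fin k → EuclideanSpace ℝ (Fin d))
    (L : (Fin k → EuclideanSpace ℝ (Fin d)) → ℝ)
    (hL : L = fun θ => 2 * ∑ i, ∑ j ∈ Finset.univ.filter (fun j => i < j), h (θ i - θ j)
      - 2 * ∑ i, ∑ j, h (θ i - w j))
    (θ : Fin k → EuclideanSpace ℝ (Fin d))
    (hsepw : ∀ i j, θ i ≠ w j) :
    laplacian (fun v => L (fun i => θ i + v)) 0
        = -2 * ∑ i, ∑ j, laplacian h (θ i - w j) ∧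
    laplacian (fun v => L (fun i => θ i + v)) 0 < 0 ∧
    ¬ IsLocalMin (fun v => L (fun i => θ i + v)) 0 ∧
    ¬ IsLocalMin L θ := by
  have : Nonempty (Fin k) := ⟨⟨0, hk⟩⟩
  have hshift : ∀ i j, ContDiffAt ℝ 2 (fun v => h (θ i - w j + v)) 0 := fun i j => by
    have hne : θ i - w j + 0 ≠ 0 := by simpa using sub_ne_zero.2 (hsepw i j)
    exact (hC2.contDiffAt (isOpen_compl_singleton.mem_nhds hne)).comp 0 (by fun_prop)
  have hsum : ContDiffAt ℝ 2 (fun v => ∑ i, ∑ j, h (θ i - w j + v)) 0 :=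
    ContDiffAt.sum fun i _ => ContDiffAt.sum fun j _ => hshift i j
  have htranslate : (fun v => L fun i => θ i + v) = fun v =>
      2 * ∑ i, ∑ j ∈ univ.filter (fun j => i < j), h (θ i - θ j)
        + -2 * ∑ i, ∑ j, h (θ i - w j + v) := by
    funext v
    simp only [hL, add_sub_add_right_eq_sub]
    simp only [add_sub_right_comm]
    ring
  have hlap : laplacian (fun v => L fun i => θ i + v) 0
      = -2 * ∑ i, ∑ j, laplacian h (θ i - w j) := by
    rw [htranslate, laplacian_const_add _ (contDiffAt_const.mul hsum), laplacian_const_mul _ hsum,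
      laplacian_sum _ fun i _ => ContDiffAt.sum fun j _ => hshift i j]
    simp only [laplacian_sum _ fun j _ => hshift _ j, laplacian_comp_add_left, add_zero]
  have hneg : laplacian (fun v => L fun i => θ i + v) 0 < 0 := by
    have hpos : 0 < ∑ i, ∑ j, laplacian h (θ i - w j) :=
      sum_pos (fun i _ => sum_pos (fun j _ => hsub _ (sub_ne_zero.2 (hsepw i j))) univ_nonempty)
        univ_nonempty
    linarith
  have hnotmin : ¬ IsLocalMin (fun v => L fun i => θ i + v) 0 := fun hmin =>
    hneg.not_ge <| hmin.laplacian_nonneg <|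
      htranslate ▸ contDiffAt_const.add (contDiffAt_const.mul hsum)
  refine ⟨hlap, hneg, hnotmin, fun hmin => hnotmin ?_⟩
  exact IsLocalMin.comp_continuous (by simpa using hmin) (by fun_prop)
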